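/- For a statistical manifold (M, g, ∇), the following are equivalent: (1) ∇C is totally symmetric; (2) ∇̂C is totally symmetric; (3) ∇̂K is totally symmetric (i.e. (∇̂_X K)(Y,Z) is symmetric in all three arguments). -/
import Mathlib


open scoped BigOperators

namespace StatMfd

/-- Vector fields on an "abstract manifold": derivations of the algebra `A`
of smooth functions. -/
abbrev VF (A : Type*) [CommRing A] [Algebra ℝ A] := Derivation ℝ A A

variable {A : Type*} [CommRing A] [Algebra ℝ A]

/-- An affine connection on vector fields. -/
structure Conn (A : Type*) [CommRing A] [Algebra ℝ A] where
  D : VF A → VF A → VF A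
  add_left : ∀ X Y Z, D (X + Y) Z = D X Z + D Y Z
  smul_left : ∀ (f : A) (X Y), D (f • X) Y = f • D X Y
  add_right : ∀ X Y Z, D X (Y + Z) = D X Y + D X Z
  leibniz : ∀ (f : A) (X Y), D X (f • Y) = f • D X Y + (X f) • Y

/-- A pseudo-Riemannian metric: a symmetric nondegenerate `A`-bilinear form. -/
structure Metric (A : Type*) [CommRing A] [Algebra ℝ A] where
  g : VF A → VF A → A
  add_left : ∀ X Y Z, g (X + Y) Z = g X Z + g Y Z
  smul_left : ∀ (f : A) (X Y), g (f • X) Y = f * g X Y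
  symm : ∀ X Y, g X Y = g Y X
  nondeg : ∀ X, (∀ Y, g X Y = 0) → X = 0

/-- The connection `∇` is torsion free. -/
def TorsionFree (C : Conn A) : Prop := ∀ X Y, C.D X Y - C.D Y X = ⁅X, Y⁆

/-- The cubic form `C(X,Y,Z) = (∇_X g)(Y,Z)`. -/
def cubic (gm : Metric A) (C : Conn A) (X Y Z : VF A) : A :=
  X (gm.g Y Z) - gm.g (C.D X Y) Z - gm.g Y (C.D X Z)

/-- Total symmetry of a `(0,3)`-tensor (valued in `A` or in vector fields). -/
def TotSym3 {B : Type*} (T : VF A → VF A → VF A → B) : Prop :=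
  (∀ X Y Z, T X Y Z = T Y X Z) ∧ (∀ X Y Z, T X Y Z = T X Z Y)

/-- Total symmetry of a `(0,4)`-tensor. -/
def TotSym4 (T : VF A → VF A → VF A → VF A → A) : Prop :=
  (∀ X Y Z W, T X Y Z W = T Y X Z W) ∧ (∀ X Y Z W, T X Y Z W = T X Z Y W) ∧
    (∀ X Y Z W, T X Y Z W = T X Y W Z)

/-- `(g, ∇)` is a statistical structure. -/
def IsStatistical (gm : Metric A) (C : Conn A) : Prop :=
  TorsionFree C ∧ TotSym3 (cubic gm C)

/-- `∇*` is the dual connection of `∇` with respect to `g`. -/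
def IsDual (gm : Metric A) (C Cs : Conn A) : Prop :=
  ∀ X Y Z, X (gm.g Y Z) = gm.g (C.D X Y) Z + gm.g Y (Cs.D X Z)

/-- `h` is the Levi-Civita connection of `g`. -/
def IsLeviCivita (gm : Metric A) (h : Conn A) : Prop :=
  TorsionFree h ∧ ∀ X Y Z, X (gm.g Y Z) = gm.g (h.D X Y) Z + gm.g Y (h.D X Z)

/-- The difference tensor `K(X,Y) = ∇_X Y − ∇̂_X Y`. -/
def Kdiff (C h : Conn A) (X Y : VF A) : VF A := C.D X Y - h.D X Y

/-- The curvature tensor of a connection. -/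
def curv (C : Conn A) (X Y Z : VF A) : VF A :=
  C.D X (C.D Y Z) - C.D Y (C.D X Z) - C.D ⁅X, Y⁆ Z

/-- `(∇_X K)(Y,Z)` for a `(1,2)`-tensor `K`. -/
def covK (C : Conn A) (K : VF A → VF A → VF A) (X Y Z : VF A) : VF A :=
  C.D X (K Y Z) - K (C.D X Y) Z - K Y (C.D X Z)

/-- `(∇_X T)(Y,Z,W)` for a `(0,3)`-tensor `T`. -/
def covC (C : Conn A) (T : VF A → VF A → VF A → A) (X Y Z W : VF A) : A :=
  X (T Y Z W) - T (C.D X Y) Z W - T Y (C.D X Z) W - T Y Z (C.D X W)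

/-- `(∇_X T)(Y,Z)` for a `(0,2)`-tensor `T`. -/
def cov2 (C : Conn A) (T : VF A → VF A → A) (X Y Z : VF A) : A :=
  X (T Y Z) - T (C.D X Y) Z - T Y (C.D X Z)

/-- `(∇_X R)(Y,Z)W` for the curvature tensor of a connection. -/
def covR (C : Conn A) (X Y Z W : VF A) : VF A :=
  C.D X (curv C Y Z W) - curv C (C.D X Y) Z W - curv C Y (C.D X Z) W
    - curv C Y Z (C.D X W)

/-- A global frame of vector fields together with its dual coframe. -/
structure Frame (A : Type*) [CommRing A] [Algebra ℝ A] (n : ℕ) where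
  e : Fin n → VF A
  ε : Fin n → VF A → A
  ε_add : ∀ i X Y, ε i (X + Y) = ε i X + ε i Y
  ε_smul : ∀ i (f : A) X, ε i (f • X) = f * ε i X
  expand : ∀ X, X = ∑ i, ε i X • e i

/-- The Ricci curvature `Ric(Y,Z) = tr{X ↦ R(X,Y)Z}` computed in a frame. -/
def ricci {n : ℕ} (F : Frame A n) (C : Conn A) (Y Z : VF A) : A :=
  ∑ i, F.ε i (curv C (F.e i) Y Z)

/-- `τ_g(X) = tr K_X` computed in a frame. -/
def tau {n : ℕ} (F : Frame A n) (K : VF A → VF A → VF A) (X : VF A) : A :=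
  ∑ i, F.ε i (K X (F.e i))

/-- `(div^∇̂ K)(Y,Z)`, the trace of `V ↦ (∇̂_V K)(Y,Z)`, computed in a frame. -/
def divK {n : ℕ} (F : Frame A n) (h : Conn A) (K : VF A → VF A → VF A)
    (Y Z : VF A) : A :=
  ∑ i, F.ε i (covK h K (F.e i) Y Z)

/-- `(M,g,∇)` has constant curvature `k`. -/
def ConstCurv (gm : Metric A) (C : Conn A) (k : ℝ) : Prop :=
  ∀ X Y Z, curv C X Y Z = k • (gm.g Y Z • X - gm.g X Z • Y)

/-- Projective flatness of a connection, via Eisenhart's characterization: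
for `n = 2` total symmetry of `∇ Ric`, for `n ≥ 3` vanishing of the
projective curvature tensor. -/
def ProjFlat {n : ℕ} (F : Frame A n) (C : Conn A) : Prop :=
  (n = 2 ∧ TotSym3 (cov2 C (ricci F C))) ∨
    (3 ≤ n ∧ ∀ X Y Z, curv C X Y Z =
      ((n : ℝ) - 1)⁻¹ • (ricci F C Y Z • X - ricci F C X Z • Y))



/- ======================= Auxiliary development ======================= -/

section Aux

variable (gm : Metric A) (C h : Conn A)

lemma g_zero_left (Y : VF A) : gm.g 0 Y = 0 := by
  have h0 := gm.add_left 0 0 Y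
  rw [add_zero] at h0
  linear_combination -h0

lemma g_sub_left (X Y Z : VF A) : gm.g (X - Y) Z = gm.g X Z - gm.g Y Z := by
  have h0 := gm.add_left (X - Y) Y Z
  have e : X - Y + Y = X := by abel
  rw [e] at h0
  linear_combination -h0

lemma g_add_right (X Y Z : VF A) : gm.g X (Y + Z) = gm.g X Y + gm.g X Z := by
  rw [gm.symm X (Y + Z), gm.add_left, gm.symm Y X, gm.symm Z X]

lemma g_ext {U V : VF A} (hUV : ∀ W, gm.g U W = gm.g V W) : U = V := by
  have h0 := gm.nondeg (U - V) (fun W => by rw [g_sub_left gm, hUV, sub_self])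
  exact sub_eq_zero.mp h0

lemma half_eq {x y : A} (hxy : x + x = y + y) : x = y := by
  have h2 : (2:ℝ) • x = (2:ℝ) • y := by rw [two_smul, two_smul]; exact hxy
  calc x = (1:ℝ) • x := (one_smul ℝ x).symm
    _ = ((2:ℝ)⁻¹ * 2) • x := by norm_num
    _ = (2:ℝ)⁻¹ • ((2:ℝ) • x) := by rw [mul_smul]
    _ = (2:ℝ)⁻¹ • ((2:ℝ) • y) := by rw [h2]
    _ = ((2:ℝ)⁻¹ * 2) • y := by rw [mul_smul]
    _ = (1:ℝ) • y := by norm_num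
    _ = y := one_smul ℝ y

lemma conn_sub_left (c : Conn A) (X Y Z : VF A) :
    c.D (X - Y) Z = c.D X Z - c.D Y Z := by
  have h0 := c.add_left (X - Y) Y Z
  have e : X - Y + Y = X := by abel
  rw [e] at h0
  exact eq_sub_of_add_eq h0.symm

lemma K_add_left (X Y Z : VF A) :
    Kdiff C h (X + Y) Z = Kdiff C h X Z + Kdiff C h Y Z := by
  unfold Kdiff
  rw [C.add_left, h.add_left]
  abel

lemma K_add_right (X Y Z : VF A) :
    Kdiff C h X (Y + Z) = Kdiff C h X Y + Kdiff C h X Z := by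
  unfold Kdiff
  rw [C.add_right, h.add_right]
  abel

lemma CD_eq (X Y : VF A) : C.D X Y = h.D X Y + Kdiff C h X Y := by
  unfold Kdiff; abel

lemma K_symm (hC : TorsionFree C) (hh : TorsionFree h) (X Y : VF A) :
    Kdiff C h X Y = Kdiff C h Y X := by
  have h1 := hC X Y
  have h2 := hh X Y
  have h3 : C.D X Y - C.D Y X - (h.D X Y - h.D Y X) = 0 := by
    rw [h1, h2, sub_self]
  unfold Kdiff
  rw [← sub_eq_zero, ← h3]
  abel

/-- `T(X,Y,Z) = g(K(X,Y),Z)`. -/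
def Tf (X Y Z : VF A) : A := gm.g (Kdiff C h X Y) Z

lemma Tf12 (hC : TorsionFree C) (hh : TorsionFree h) (X Y Z : VF A) :
    Tf gm C h X Y Z = Tf gm C h Y X Z := by
  unfold Tf
  rw [K_symm C h hC hh X Y]

lemma cubic_expand (hLC : IsLeviCivita gm h) (X Y Z : VF A) :
    cubic gm C X Y Z = -(Tf gm C h X Y Z) - Tf gm C h X Z Y := by
  unfold cubic Tf Kdiff
  rw [g_sub_left gm, g_sub_left gm]
  have hm := hLC.2 X Y Z
  have s1 := gm.symm Y (C.D X Z)
  have s2 := gm.symm Y (h.D X Z)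
  linear_combination hm - s1 + s2

lemma Tf13 (hstat : IsStatistical gm C) (hLC : IsLeviCivita gm h) (X Y Z : VF A) :
    Tf gm C h X Y Z = Tf gm C h Z Y X := by
  have hc := hstat.2.1 X Z Y
  rw [cubic_expand gm C h hLC, cubic_expand gm C h hLC] at hc
  have h12a := Tf12 gm C h hstat.1 hLC.1 X Z Y
  linear_combination -hc - h12a

lemma Tf23 (hstat : IsStatistical gm C) (hLC : IsLeviCivita gm h) (X Y Z : VF A) :
    Tf gm C h X Y Z = Tf gm C h X Z Y := by
  rw [Tf12 gm C h hstat.1 hLC.1 X Y Z, Tf13 gm C h hstat hLC Y X Z,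
    Tf12 gm C h hstat.1 hLC.1 Z X Y]

lemma Tf_right (hstat : IsStatistical gm C) (hLC : IsLeviCivita gm h) (X Y Z : VF A) :
    gm.g (Kdiff C h X Y) Z = gm.g X (Kdiff C h Y Z) := by
  have e1 : Tf gm C h X Y Z = Tf gm C h Y Z X := by
    rw [Tf13 gm C h hstat hLC X Y Z, Tf12 gm C h hstat.1 hLC.1 Z Y X]
  unfold Tf at e1
  rw [e1, gm.symm]

lemma cubic2 (hstat : IsStatistical gm C) (hLC : IsLeviCivita gm h) (X Y Z : VF A) :
    cubic gm C X Y Z = -(Tf gm C h X Y Z) - Tf gm C h X Y Z := by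
  rw [cubic_expand gm C h hLC, Tf23 gm C h hstat hLC X Z Y]

lemma covK_g (hLC : IsLeviCivita gm h) (X Y Z W : VF A) :
    gm.g (covK h (Kdiff C h) X Y Z) W =
      X (Tf gm C h Y Z W) - Tf gm C h (h.D X Y) Z W
        - Tf gm C h Y (h.D X Z) W - Tf gm C h Y Z (h.D X W) := by
  unfold covK Tf
  rw [g_sub_left gm, g_sub_left gm]
  have hm := hLC.2 X (Kdiff C h Y Z) W
  linear_combination -hm

lemma covCh (hstat : IsStatistical gm C) (hLC : IsLeviCivita gm h) (X Y Z W : VF A) :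
    covC h (cubic gm C) X Y Z W =
      -(gm.g (covK h (Kdiff C h) X Y Z) W) - gm.g (covK h (Kdiff C h) X Y Z) W := by
  have hk := covK_g gm C h hLC X Y Z W
  unfold covC
  simp only [cubic2 gm C h hstat hLC]
  rw [map_sub, map_neg]
  linear_combination (2:A) * hk

lemma covK23 (hC : TorsionFree C) (hh : TorsionFree h) (X Y Z : VF A) :
    covK h (Kdiff C h) X Y Z = covK h (Kdiff C h) X Z Y := by
  unfold covK
  rw [K_symm C h hC hh Y Z, K_symm C h hC hh (h.D X Y) Z, K_symm C h hC hh Y (h.D X Z)]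
  abel

lemma g_covK34 (hstat : IsStatistical gm C) (hLC : IsLeviCivita gm h) (X Y Z W : VF A) :
    gm.g (covK h (Kdiff C h) X Y Z) W = gm.g (covK h (Kdiff C h) X Y W) Z := by
  rw [covK_g gm C h hLC X Y Z W, covK_g gm C h hLC X Y W Z]
  have e1 : X (Tf gm C h Y Z W) = X (Tf gm C h Y W Z) := by
    rw [Tf23 gm C h hstat hLC Y Z W]
  have t2 := Tf23 gm C h hstat hLC (h.D X Y) Z W
  have t3 := Tf23 gm C h hstat hLC Y (h.D X Z) W
  have t4 := Tf23 gm C h hstat hLC Y Z (h.D X W)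
  linear_combination e1 - t2 - t3 - t4

/-- `S(X,Y,Z,W) = Q(XY;ZW) + Q(XZ;YW) + Q(XW;YZ)` with `Q(ab;cd)=g(K(a,b),K(c,d))`. -/
def Sf (X Y Z W : VF A) : A :=
  gm.g (Kdiff C h X Y) (Kdiff C h Z W) + gm.g (Kdiff C h X Z) (Kdiff C h Y W)
    + gm.g (Kdiff C h X W) (Kdiff C h Y Z)

lemma Sf12 (hC : TorsionFree C) (hh : TorsionFree h) (X Y Z W : VF A) :
    Sf gm C h X Y Z W = Sf gm C h Y X Z W := by
  unfold Sf
  rw [K_symm C h hC hh X Y, gm.symm (Kdiff C h X Z) (Kdiff C h Y W),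
    gm.symm (Kdiff C h X W) (Kdiff C h Y Z)]
  ring

lemma Sf23 (hC : TorsionFree C) (hh : TorsionFree h) (X Y Z W : VF A) :
    Sf gm C h X Y Z W = Sf gm C h X Z Y W := by
  unfold Sf
  rw [K_symm C h hC hh Z Y]
  ring

lemma Sf34 (hC : TorsionFree C) (hh : TorsionFree h) (X Y Z W : VF A) :
    Sf gm C h X Y Z W = Sf gm C h X Y W Z := by
  unfold Sf
  rw [K_symm C h hC hh W Z]
  ring

lemma covC_diff (hstat : IsStatistical gm C) (hLC : IsLeviCivita gm h) (X Y Z W : VF A) :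
    covC C (cubic gm C) X Y Z W =
      covC h (cubic gm C) X Y Z W + Sf gm C h X Y Z W + Sf gm C h X Y Z W := by
  have r1 : Tf gm C h (C.D X Y) Z W = Tf gm C h (h.D X Y) Z W
      + gm.g (Kdiff C h X Y) (Kdiff C h Z W) := by
    unfold Tf
    rw [CD_eq C h X Y, K_add_left, gm.add_left,
      Tf_right gm C h hstat hLC (Kdiff C h X Y) Z W]
  have r2 : Tf gm C h Y (C.D X Z) W = Tf gm C h Y (h.D X Z) W
      + gm.g (Kdiff C h X Z) (Kdiff C h Y W) := by
    unfold Tf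
    rw [CD_eq C h X Z, K_add_right, gm.add_left,
      K_symm C h hstat.1 hLC.1 Y (Kdiff C h X Z),
      Tf_right gm C h hstat hLC (Kdiff C h X Z) Y W]
  have r3 : Tf gm C h Y Z (C.D X W) = Tf gm C h Y Z (h.D X W)
      + gm.g (Kdiff C h X W) (Kdiff C h Y Z) := by
    unfold Tf
    rw [CD_eq C h X W, g_add_right, gm.symm (Kdiff C h Y Z) (Kdiff C h X W)]
  unfold covC Sf
  simp only [cubic2 gm C h hstat hLC]
  linear_combination (2:A) * r1 + (2:A) * r2 + (2:A) * r3

lemma covC_diff' (hstat : IsStatistical gm C) (hLC : IsLeviCivita gm h) (X Y Z W : VF A) :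
    covC h (cubic gm C) X Y Z W =
      covC C (cubic gm C) X Y Z W - Sf gm C h X Y Z W - Sf gm C h X Y Z W := by
  linear_combination -covC_diff gm C h hstat hLC X Y Z W

end Aux

/-- `∇C` totally symmetric ↔ `∇̂C` totally symmetric ↔ `∇̂K`
totally symmetric. -/
theorem stmt3 (gm : Metric A) (C h : Conn A)
    (hstat : IsStatistical gm C) (hLC : IsLeviCivita gm h) :
    (TotSym4 (covC C (cubic gm C)) ↔ TotSym4 (covC h (cubic gm C))) ∧
      (TotSym4 (covC h (cubic gm C)) ↔ TotSym3 (covK h (Kdiff C h))) := by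
  have hC := hstat.1
  have hh := hLC.1
  constructor
  · -- part 1
    constructor
    · intro hs
      refine ⟨fun X Y Z W => ?_, fun X Y Z W => ?_, fun X Y Z W => ?_⟩
      · rw [covC_diff' gm C h hstat hLC X Y Z W, covC_diff' gm C h hstat hLC Y X Z W,
          hs.1 X Y Z W, Sf12 gm C h hC hh X Y Z W]
      · rw [covC_diff' gm C h hstat hLC X Y Z W, covC_diff' gm C h hstat hLC X Z Y W,
          hs.2.1 X Y Z W, Sf23 gm C h hC hh X Y Z W]
      · rw [covC_diff' gm C h hstat hLC X Y Z W, covC_diff' gm C h hstat hLC X Y W Z,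
          hs.2.2 X Y Z W, Sf34 gm C h hC hh X Y Z W]
    · intro hs
      refine ⟨fun X Y Z W => ?_, fun X Y Z W => ?_, fun X Y Z W => ?_⟩
      · rw [covC_diff gm C h hstat hLC X Y Z W, covC_diff gm C h hstat hLC Y X Z W,
          hs.1 X Y Z W, Sf12 gm C h hC hh X Y Z W]
      · rw [covC_diff gm C h hstat hLC X Y Z W, covC_diff gm C h hstat hLC X Z Y W,
          hs.2.1 X Y Z W, Sf23 gm C h hC hh X Y Z W]
      · rw [covC_diff gm C h hstat hLC X Y Z W, covC_diff gm C h hstat hLC X Y W Z,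
          hs.2.2 X Y Z W, Sf34 gm C h hC hh X Y Z W]
  · -- part 2
    constructor
    · intro hs
      refine ⟨fun X Y Z => ?_, fun X Y Z => covK23 C h hC hh X Y Z⟩
      apply g_ext gm
      intro W
      have h1 := hs.1 X Y Z W
      rw [covCh gm C h hstat hLC X Y Z W, covCh gm C h hstat hLC Y X Z W] at h1
      have h2 : gm.g (covK h (Kdiff C h) X Y Z) W + gm.g (covK h (Kdiff C h) X Y Z) W
          = gm.g (covK h (Kdiff C h) Y X Z) W + gm.g (covK h (Kdiff C h) Y X Z) W := by
        linear_combination -h1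
      exact half_eq h2
    · intro hk
      refine ⟨fun X Y Z W => ?_, fun X Y Z W => ?_, fun X Y Z W => ?_⟩
      · rw [covCh gm C h hstat hLC X Y Z W, covCh gm C h hstat hLC Y X Z W, hk.1 X Y Z]
      · rw [covCh gm C h hstat hLC X Y Z W, covCh gm C h hstat hLC X Z Y W,
          hk.2 X Y Z]
      · rw [covCh gm C h hstat hLC X Y Z W, covCh gm C h hstat hLC X Y W Z,
          g_covK34 gm C h hstat hLC X Y Z W]

end StatMfd
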